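/- The state ρ_SU = (1/4)(I₈ − Σᵢ |Sᵢ⟩⟨Sᵢ|) is not fully separable: it cannot be written as a convex combination of pure product states |a⟩⟨a|⊗|b⟩⟨b|⊗|c⟩⟨c|. -/

import Mathlib

noncomputable section

open scoped BigOperators

abbrev Q3 := Fin 2 × Fin 2 × Fin 2

def ket0 : Fin 2 → ℂ := ![1, 0]
def ket1 : Fin 2 → ℂ := ![0, 1]
noncomputable def ketP : Fin 2 → ℂ := ![(Real.sqrt 2 : ℂ)⁻¹, (Real.sqrt 2 : ℂ)⁻¹]
noncomputable def ketM : Fin 2 → ℂ := ![(Real.sqrt 2 : ℂ)⁻¹, -(Real.sqrt 2 : ℂ)⁻¹]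

/-- tensor product of three single-qubit vectors -/
def tp3 (a b c : Fin 2 → ℂ) : Q3 → ℂ := fun x => a x.1 * b x.2.1 * c x.2.2

/-- the four Shifts UPB states -/
noncomputable def Shifts : Fin 4 → Q3 → ℂ :=
  ![tp3 ket0 ket1 ketP, tp3 ket1 ketP ket0, tp3 ketP ket0 ket1, tp3 ketM ketM ketM]

/-- standard inner product -/
def ip {n : Type*} [Fintype n] (x y : n → ℂ) : ℂ := ∑ i, star (x i) * y i

/-- projector onto a vector -/
def proj {n : Type*} [Fintype n] (v : n → ℂ) : Matrix n n ℂ := Matrix.vecMulVec v (star v)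

/-- the state ρ_SU -/
noncomputable def rhoSU : Matrix Q3 Q3 ℂ :=
  (4 : ℂ)⁻¹ • ((1 : Matrix Q3 Q3 ℂ) - ∑ i : Fin 4, proj (Shifts i))

/-!
The Shifts states are orthonormal, so each `Sⱼ` lies in the kernel of `ρ_SU`. If
`ρ_SU = ∑ pᵢ |vᵢ⟩⟨vᵢ|`, then `0 = ⟨Sⱼ, ρ_SU Sⱼ⟩ = ∑ pᵢ |⟨Sⱼ, vᵢ⟩|²`, so every product vector of
positive weight is orthogonal to all four `Sⱼ`, which unextendibility of the UPB forbids.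
-/

open Matrix

section InnerProduct

variable {n : Type*} [Fintype n]

lemma ip_swap (x y : n → ℂ) : ip y x = star (ip x y) :=
  star_dotProduct y x

lemma ip_smul (x y : n → ℂ) (c : ℂ) : ip x (c • y) = c * ip x y :=
  dotProduct_smul c (star x) y

lemma ip_sum {ι : Type*} (s : Finset ι) (x : n → ℂ) (y : ι → n → ℂ) :
    ip x (∑ i ∈ s, y i) = ∑ i ∈ s, ip x (y i) :=
  dotProduct_sum (star x) s y

lemma ip_zero (x : n → ℂ) : ip x 0 = 0 :=
  dotProduct_zero (star x)

lemma proj_mulVec (v w : n → ℂ) : proj v *ᵥ w = ip v w • v := by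
  rw [proj, vecMulVec_mulVec, op_smul_eq_smul]
  rfl

lemma ip_proj_mulVec (v w : n → ℂ) : ip w (proj v *ᵥ w) = Complex.normSq (ip w v) := by
  rw [proj_mulVec, ip_smul, ip_swap, mul_comm, ← Complex.mul_conj]
  rfl

lemma ip_eq_zero_of_sum_smul_proj_mulVec_eq_zero {ι : Type*} [Fintype ι] {p : ι → ℝ}
    (hp : ∀ i, 0 ≤ p i) (v : ι → n → ℂ) {w : n → ℂ}
    (hw : (∑ i, (p i : ℂ) • proj (v i)) *ᵥ w = 0) {i : ι} (hi : p i ≠ 0) : ip w (v i) = 0 := by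
  have hsum : ∑ i, p i * Complex.normSq (ip w (v i)) = 0 := by
    have h := congrArg (ip w) hw
    simp only [sum_mulVec, smul_mulVec, ip_sum, ip_smul, ip_proj_mulVec, ip_zero] at h
    exact_mod_cast h
  have hterm := (Finset.sum_eq_zero_iff_of_nonneg fun i _ =>
    mul_nonneg (hp i) (Complex.normSq_nonneg (ip w (v i)))).mp hsum i (Finset.mem_univ i)
  simpa [hi] using hterm

end InnerProduct

lemma ip_tp3 (a b c a' b' c' : Fin 2 → ℂ) :
    ip (tp3 a b c) (tp3 a' b' c') = ip a a' * ip b b' * ip c c' := by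
  simp only [ip, tp3, Fintype.sum_prod_type, Fin.sum_univ_two, star_mul']
  ring

lemma ip_ket0 (v : Fin 2 → ℂ) : ip ket0 v = v 0 := by
  simp [ip, ket0, Fin.sum_univ_two]

lemma ip_ket1 (v : Fin 2 → ℂ) : ip ket1 v = v 1 := by
  simp [ip, ket1, Fin.sum_univ_two]

lemma ip_ketP (v : Fin 2 → ℂ) : ip ketP v = (Real.sqrt 2 : ℂ)⁻¹ * (v 0 + v 1) := by
  simp [ip, ketP, Fin.sum_univ_two]
  ring

lemma ip_ketM (v : Fin 2 → ℂ) : ip ketM v = (Real.sqrt 2 : ℂ)⁻¹ * (v 0 - v 1) := by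
  simp [ip, ketM, Fin.sum_univ_two]
  ring

lemma ip_Shifts_Shifts (i j : Fin 4) : ip (Shifts i) (Shifts j) = if i = j then 1 else 0 := by
  have hsqrt : (Real.sqrt 2 : ℂ)⁻¹ * ((Real.sqrt 2 : ℂ)⁻¹ + (Real.sqrt 2 : ℂ)⁻¹) = 1 := by
    rw [← two_mul, mul_left_comm, ← mul_inv, ← Complex.ofReal_mul, Real.mul_self_sqrt zero_le_two]
    norm_num
  fin_cases i <;> fin_cases j <;>
    simp [Shifts, ip_tp3, ip_ket0, ip_ket1, ip_ketP, ip_ketM] <;>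
    simp [ket0, ket1, ketP, ketM, hsqrt]

lemma rhoSU_mulVec_Shifts (j : Fin 4) : rhoSU *ᵥ Shifts j = 0 := by
  simp only [rhoSU, smul_mulVec, sub_mulVec, one_mulVec, sum_mulVec, proj_mulVec,
    ip_Shifts_Shifts, ite_smul, one_smul, zero_smul, Finset.sum_ite_eq', Finset.mem_univ,
    if_true, sub_self, smul_zero]

def qubitKet : Fin 4 → Fin 2 → ℂ := ![ket0, ket1, ketP, ketM]

lemma eq_zero_of_ip_qubitKet_eq_zero {m m' : Fin 4} (hne : m ≠ m') {v : Fin 2 → ℂ}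
    (h : ip (qubitKet m) v = 0) (h' : ip (qubitKet m') v = 0) : v = 0 := by
  suffices v 0 = 0 ∧ v 1 = 0 by ext i; fin_cases i <;> simp [this]
  fin_cases m <;> fin_cases m' <;>
    simp_all [qubitKet, ip_ket0, ip_ket1, ip_ketP, ip_ketM] <;> grind

def shiftIndex : Fin 3 → Fin 4 → Fin 4 := ![![0, 1, 2, 3], ![1, 2, 0, 3], ![2, 0, 1, 3]]

lemma shiftIndex_injective (k : Fin 3) : Function.Injective (shiftIndex k) := by
  fin_cases k <;> decide

lemma ip_Shifts_tp3 (j : Fin 4) (w : Fin 3 → Fin 2 → ℂ) :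
    ip (Shifts j) (tp3 (w 0) (w 1) (w 2)) = ∏ k, ip (qubitKet (shiftIndex k j)) (w k) := by
  rw [Fin.prod_univ_three]
  fin_cases j <;> exact ip_tp3 _ _ _ _ _ _

/-- By pigeonhole, two of the four states are orthogonal to the product vector in the same factor,
and any two of `|0⟩, |1⟩, |+⟩, |−⟩` span `ℂ²`. -/
theorem eq_zero_of_forall_ip_Shifts_tp3_eq_zero {a b c : Fin 2 → ℂ}
    (h : ∀ j, ip (Shifts j) (tp3 a b c) = 0) : a = 0 ∨ b = 0 ∨ c = 0 := by
  set w : Fin 3 → Fin 2 → ℂ := ![a, b, c]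
  have hfactor : ∀ j, ∃ k, ip (qubitKet (shiftIndex k j)) (w k) = 0 := fun j =>
    Finset.prod_eq_zero_iff.mp ((ip_Shifts_tp3 j w).symm.trans (h j)) |>.imp fun _ => And.right
  choose f hf using hfactor
  obtain ⟨j, j', hne, hjj'⟩ := Fintype.exists_ne_map_eq_of_card_lt f (by simp)
  have hw : w (f j) = 0 :=
    eq_zero_of_ip_qubitKet_eq_zero ((shiftIndex_injective _).ne hne) (hf j) (hjj' ▸ hf j')
  generalize f j = k at hw
  fin_cases k <;> simp_all [w]

theorem rhoSU_not_fully_separable :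
    ¬ ∃ (n : ℕ) (p : Fin n → ℝ) (a b c : Fin n → Fin 2 → ℂ),
      (∀ i, 0 ≤ p i) ∧ (∑ i, p i) = 1 ∧
      (∀ i, ip (tp3 (a i) (b i) (c i)) (tp3 (a i) (b i) (c i)) = 1) ∧
      rhoSU = ∑ i, (p i : ℂ) • proj (tp3 (a i) (b i) (c i)) := by
  rintro ⟨n, p, a, b, c, hp, hsum, hnorm, hrho⟩
  obtain ⟨i, -, hi⟩ := Finset.exists_ne_zero_of_sum_ne_zero (hsum.trans_ne one_ne_zero)
  have horth : ∀ j, ip (Shifts j) (tp3 (a i) (b i) (c i)) = 0 := fun j =>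
    ip_eq_zero_of_sum_smul_proj_mulVec_eq_zero hp _ (hrho ▸ rhoSU_mulVec_Shifts j) hi
  have hunit := hnorm i
  rcases eq_zero_of_forall_ip_Shifts_tp3_eq_zero horth with h | h | h <;>
    simp [ip, tp3, h] at hunit
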